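/- A small deductive system for incorrectness triples over relational semantics is sound and relatively complete: define provability ⊢ [c] R [d] inductively by the axiom ⊢ [fun G => c G ∧ App(R) G] R [WPost(R,c)] for atomic relations, the sequencing rule (from ⊢ [c] P [e] and ⊢ [e] Q [d] infer ⊢ [c] P;Q [d]), and the consequence rule (from c' → c, d → d', ⊢ [c'] S [d'] infer ⊢ [c] S [d]). Then for programs built from atomic relations by sequencing, ⊢ [c] S [d] holds if and only if ⊨ [c] S [d]. -/
import Mathlib

def Valid {S : Type*} (c : S → Prop) (R : S → S → Prop) (d : S → Prop) : Prop :=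
  ∀ H, d H → ∃ G, c G ∧ R G H

def App {S : Type*} (R : S → S → Prop) (G : S) : Prop := ∃ H, R G H

def WPost {S : Type*} (R : S → S → Prop) (c : S → Prop) (H : S) : Prop :=
  ∃ G, c G ∧ R G H

inductive Prog (S : Type*) where
  | atom : (S → S → Prop) → Prog S
  | seq : Prog S → Prog S → Prog S

def sem {S : Type*} : Prog S → (S → S → Prop)
  | Prog.atom R => R
  | Prog.seq P Q => fun G H => ∃ G', sem P G G' ∧ sem Q G' H

inductive Provable {S : Type*} : (S → Prop) → Prog S → (S → Prop) → Prop where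
  | atom (R : S → S → Prop) (c : S → Prop) :
      Provable (fun G => c G ∧ App R G) (Prog.atom R) (WPost R c)
  | seq {c e d : S → Prop} {P Q : Prog S} :
      Provable c P e → Provable e Q d → Provable c (Prog.seq P Q) d
  | cons {c c' d d' : S → Prop} {P : Prog S} :
      (∀ s, c' s → c s) → (∀ s, d s → d' s) → Provable c' P d' → Provable c P d

theorem sound_and_complete {S : Type*} (P : Prog S) (c d : S → Prop) :
    Provable c P d ↔ Valid c (sem P) d := by
  constructor
  · intro h
    induction h with
    | atom R c =>
      intro H hH
      obtain ⟨G, hc, hR⟩ := hH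
      exact ⟨G, ⟨hc, ⟨H, hR⟩⟩, hR⟩
    | seq h1 h2 ih1 ih2 =>
      intro H hH
      obtain ⟨G', he, hQ⟩ := ih2 H hH
      obtain ⟨G, hc, hP⟩ := ih1 G' he
      exact ⟨G, hc, G', hP, hQ⟩
    | cons hc hd _ ih =>
      intro H hH
      obtain ⟨G, hc', hR⟩ := ih H (hd H hH)
      exact ⟨G, hc G hc', hR⟩
  · induction P generalizing c d with
    | atom R =>
      intro hv
      exact Provable.cons (fun s hs => hs.1) (fun s hs => hv s hs) (Provable.atom R c)
    | seq P Q ihP ihQ =>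
      intro hv
      refine Provable.seq (e := WPost (sem P) c) (ihP _ _ ?_) (ihQ _ _ ?_)
      · exact fun H hH => hH
      · intro H hH
        obtain ⟨G, hc, G', hP, hQ⟩ := hv H hH
        exact ⟨G', ⟨G, hc, hP⟩, hQ⟩
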